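/- With the data E₀, E₁, π₀, π₁, U, T₀, T₁, N₀, N₁ and V(T₀,T₁) as in the context: if π₀(N₀) ⊆ T₀ and π₁(N₁) ⊆ T₁ (i.e. T₀ and T₁ are coisotropic for π₀ and π₁ respectively), then V(T₀,T₁)^⊥ ⊆ V(T₀,T₁); that is, V(T₀,T₁) is a coisotropic subspace of (W(E₀), Ω). -/

import Mathlib

open MeasureTheory Set

/-- An element of `W(E)`: a pair `(λ, φ)` of continuous maps on `[0,1]` with values in `E`
and in the dual `E* = E →L[ℝ] ℝ` respectively. -/
structure WPair (E : Type*) [NormedAddCommGroup E] [NormedSpace ℝ E] where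
  lam : ℝ → E
  phi : ℝ → E →L[ℝ] ℝ
  lam_cont : ContinuousOn lam (Icc 0 1)
  phi_cont : ContinuousOn phi (Icc 0 1)

/-- The alternating bilinear form `Ω((λ,φ),(λ',φ')) = ∫₀¹ (φ(u)(λ'(u)) − φ'(u)(λ(u))) du`. -/
noncomputable def Omega {E : Type*} [NormedAddCommGroup E] [NormedSpace ℝ E]
    (w w' : WPair E) : ℝ :=
  ∫ u in (0:ℝ)..(1:ℝ), (w.phi u (w'.lam u) - w'.phi u (w.lam u))

/-- The `Ω`-orthogonal of a subset of `W(E)`. -/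
def orth {E : Type*} [NormedAddCommGroup E] [NormedSpace ℝ E] (A : Set (WPair E)) :
    Set (WPair E) :=
  {w | ∀ a ∈ A, Omega a w = 0}

/-- The annihilator `N = { α ∈ E* : α vanishes on T }` of a subspace `T ⊆ E`. -/
def Ann {E : Type*} [NormedAddCommGroup E] [NormedSpace ℝ E] (T : Submodule ℝ E) :
    Set (E →L[ℝ] ℝ) :=
  {α | ∀ v ∈ T, α v = 0}

/-- The space `V(T₀,T₁)` of solutions `(λ,φ)` of `λ(u) = λ(0) − π₀ ∫₀ᵘ φ` with boundary
conditions `λ(0) ∈ T₀` and `U⁻¹(λ(1)) ∈ T₁`. -/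
noncomputable def VSet {E₀ E₁ : Type*}
    [NormedAddCommGroup E₀] [NormedSpace ℝ E₀]
    [NormedAddCommGroup E₁] [NormedSpace ℝ E₁]
    (π₀ : (E₀ →L[ℝ] ℝ) →ₗ[ℝ] E₀) (U : E₁ ≃L[ℝ] E₀)
    (T₀ : Submodule ℝ E₀) (T₁ : Submodule ℝ E₁) : Set (WPair E₀) :=
  {w | (∀ u ∈ Icc (0:ℝ) 1, w.lam u = w.lam 0 - π₀ (∫ s in (0:ℝ)..u, w.phi s)) ∧
       w.lam 0 ∈ T₀ ∧ U.symm (w.lam 1) ∈ T₁}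

/-!
Pair `w = (λ, φ) ∈ V^⊥` with the elements `(x - (∫₀ᵘ g) π₀ α, g α)` of `V` (for `x ∈ T₀` and
`U⁻¹(x - (∫₀¹ g) π₀ α) ∈ T₁`) and integrate by parts: with `Φ(u) = ∫₀ᵘ φ` and `μ = λ + π₀ Φ`,
`∫₀¹ g α(μ) = Φ(1) x + (∫₀¹ g) α(π₀ Φ(1))`.
Mean-zero `g` force `μ` to be constant (du Bois-Reymond), which is the differential equation,
and `g = 1` gives `α(λ(1)) = Φ(1) x` whenever `x ∈ T₀` and `U⁻¹(x - π₀ α) ∈ T₁`.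
Coisotropy of `T₀` and `T₁` makes the choices `x = π₀ β, α = β` (`β ∈ N₀`) and
`x = 0, α = γ ∘ U⁻¹` (`γ ∈ N₁`) admissible; with skew-symmetry and `U π₁ Uᵀ = π₀` they give
`β(λ(0)) = 0` and `γ(U⁻¹ λ(1)) = 0`.
-/

section Primitive

variable {X : Type*} [NormedAddCommGroup X] [NormedSpace ℝ X] {f : ℝ → X} {a b : ℝ}

lemma ContinuousOn.continuousOn_primitive_Icc (hf : ContinuousOn f (Icc a b)) (hab : a ≤ b) :
    ContinuousOn (fun u => ∫ s in a..u, f s) (Icc a b) := by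
  have h := intervalIntegral.continuousOn_primitive_interval (μ := volume)
    (by rw [uIcc_of_le hab]; exact hf.integrableOn_Icc)
  rwa [uIcc_of_le hab] at h

lemma ContinuousOn.hasDerivAt_primitive [CompleteSpace X] (hf : ContinuousOn f (Icc a b)) {u : ℝ}
    (hu : u ∈ Ioo a b) : HasDerivAt (fun u => ∫ s in a..u, f s) (f u) u :=
  intervalIntegral.integral_hasDerivAt_right
    (hf.mono (uIcc_subset_Icc (left_mem_Icc.2 (hu.1.trans hu.2).le)
      (Ioo_subset_Icc_self hu))).intervalIntegrable
    ((hf.mono Ioo_subset_Icc_self).stronglyMeasurableAtFilter isOpen_Ioo u hu)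
    (hf.continuousAt (Icc_mem_nhds hu.1 hu.2))

end Primitive

lemma integral_primitive_mul {g f : ℝ → ℝ} {a b : ℝ} (hg : ContinuousOn g (Icc a b))
    (hf : ContinuousOn f (Icc a b)) (hab : a ≤ b) :
    ∫ u in a..b, (∫ s in a..u, g s) * f u =
      (∫ s in a..b, g s) * (∫ s in a..b, f s) - ∫ u in a..b, g u * ∫ s in a..u, f s := by
  have hIcc : uIcc a b = Icc a b := uIcc_of_le hab
  simpa using intervalIntegral.integral_mul_deriv_eq_deriv_mul_of_hasDerivAt
    (hIcc ▸ hg.continuousOn_primitive_Icc hab) (hIcc ▸ hf.continuousOn_primitive_Icc hab)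
    (fun u hu => hg.hasDerivAt_primitive (by simpa [hab] using hu))
    (fun u hu => hf.hasDerivAt_primitive (by simpa [hab] using hu))
    (hg.intervalIntegrable_of_Icc hab) (hf.intervalIntegrable_of_Icc hab)

lemma eq_of_forall_integral_mul_eq_zero {h : ℝ → ℝ} (hh : ContinuousOn h (Icc 0 1))
    (H : ∀ g : ℝ → ℝ, ContinuousOn g (Icc 0 1) → ∫ u in (0:ℝ)..1, g u = 0 →
      ∫ u in (0:ℝ)..1, g u * h u = 0)
    {u : ℝ} (hu : u ∈ Icc (0:ℝ) 1) : h u = h 0 := by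
  set c := ∫ s in (0:ℝ)..1, h s
  have hgc : ContinuousOn (fun u => h u - c) (Icc 0 1) := hh.sub continuousOn_const
  have hint : IntervalIntegrable h volume 0 1 := hh.intervalIntegrable_of_Icc zero_le_one
  have hmean : ∫ u in (0:ℝ)..1, (h u - c) = 0 := by
    simp [intervalIntegral.integral_sub hint intervalIntegrable_const, c]
  have hsq : ∫ u in (0:ℝ)..1, (h u - c) ^ 2 = 0 := by
    calc ∫ u in (0:ℝ)..1, (h u - c) ^ 2
        = ∫ u in (0:ℝ)..1, ((h u - c) * h u - (h u - c) * c) := by congr 1; ext u; ring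
      _ = (∫ u in (0:ℝ)..1, (h u - c) * h u) - (∫ u in (0:ℝ)..1, (h u - c)) * c := by
          rw [intervalIntegral.integral_sub (f := fun u => (h u - c) * h u)
            (g := fun u => (h u - c) * c) ((hgc.mul hh).intervalIntegrable_of_Icc zero_le_one)
            ((hgc.mul continuousOn_const).intervalIntegrable_of_Icc zero_le_one),
            intervalIntegral.integral_mul_const]
      _ = 0 := by rw [H _ hgc hmean, hmean]; ring
  have hconst : ∀ v ∈ Icc (0:ℝ) 1, h v = c := by
    intro v hv
    by_contra hne
    have hne' : h v - c ≠ 0 := sub_ne_zero.2 hne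
    have := intervalIntegral.integral_pos (f := fun u => (h u - c) ^ 2) zero_lt_one
      (hgc.pow 2) (fun _ _ => sq_nonneg _) ⟨v, hv, by positivity⟩
    linarith
  rw [hconst u hu, hconst 0 (left_mem_Icc.2 zero_le_one)]

lemma mem_of_forall_mem_Ann_apply_eq_zero {E : Type*} [NormedAddCommGroup E] [NormedSpace ℝ E]
    [FiniteDimensional ℝ E] {T : Submodule ℝ E} {v : E} (h : ∀ α ∈ Ann T, α v = 0) : v ∈ T :=
  (Subspace.forall_mem_dualAnnihilator_apply_eq_zero_iff T v).mp fun ℓ hℓ =>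
    h (LinearMap.toContinuousLinearMap ℓ) fun x hx => (Submodule.mem_dualAnnihilator ℓ).mp hℓ x hx

section Coisotropic

variable {E₀ E₁ : Type*} [NormedAddCommGroup E₀] [NormedSpace ℝ E₀]
  [NormedAddCommGroup E₁] [NormedSpace ℝ E₁]
  {π₀ : (E₀ →L[ℝ] ℝ) →ₗ[ℝ] E₀} {U : E₁ ≃L[ℝ] E₀} {T₀ : Submodule ℝ E₀} {T₁ : Submodule ℝ E₁}

noncomputable def testPair (π₀ : (E₀ →L[ℝ] ℝ) →ₗ[ℝ] E₀) (x : E₀) (α : E₀ →L[ℝ] ℝ) {g : ℝ → ℝ}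
    (hg : ContinuousOn g (Icc 0 1)) : WPair E₀ where
  lam u := x - (∫ s in (0:ℝ)..u, g s) • π₀ α
  phi u := g u • α
  lam_cont := continuousOn_const.sub
    ((hg.continuousOn_primitive_Icc zero_le_one).smul continuousOn_const)
  phi_cont := hg.smul continuousOn_const

lemma testPair_mem_VSet {x : E₀} {α : E₀ →L[ℝ] ℝ} {g : ℝ → ℝ} (hg : ContinuousOn g (Icc 0 1))
    (hx : x ∈ T₀) (h₁ : U.symm (x - (∫ s in (0:ℝ)..1, g s) • π₀ α) ∈ T₁) :
    testPair π₀ x α hg ∈ VSet π₀ U T₀ T₁ := by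
  refine ⟨fun u _ => ?_, ?_, h₁⟩
  · simp [testPair, intervalIntegral.integral_smul_const]
  · simpa [testPair] using hx

lemma Omega_testPair_eq_integral (hskew₀ : ∀ α β : E₀ →L[ℝ] ℝ, α (π₀ β) = - β (π₀ α)) (x : E₀)
    (α : E₀ →L[ℝ] ℝ) {g : ℝ → ℝ} (hg : ContinuousOn g (Icc 0 1)) (w : WPair E₀) :
    Omega (testPair π₀ x α hg) w = ∫ u in (0:ℝ)..1,
      (g u * α (w.lam u) - w.phi u x - (∫ s in (0:ℝ)..u, g s) * α (π₀ (w.phi u))) := by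
  unfold Omega testPair
  congr 1; ext u
  simp only [FunLike.coe_smul, Pi.smul_apply, smul_eq_mul, map_sub, map_smul,
    hskew₀ (w.phi u) α]
  ring

variable [FiniteDimensional ℝ E₀]

lemma Omega_testPair (hskew₀ : ∀ α β : E₀ →L[ℝ] ℝ, α (π₀ β) = - β (π₀ α)) (x : E₀)
    (α : E₀ →L[ℝ] ℝ) {g : ℝ → ℝ} (hg : ContinuousOn g (Icc 0 1)) (w : WPair E₀) :
    Omega (testPair π₀ x α hg) w =
      (∫ u in (0:ℝ)..1, g u * α (w.lam u + π₀ (∫ s in (0:ℝ)..u, w.phi s)))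
        - (∫ s in (0:ℝ)..1, w.phi s) x
        - (∫ s in (0:ℝ)..1, g s) * α (π₀ (∫ s in (0:ℝ)..1, w.phi s)) := by
  set ℓ : (E₀ →L[ℝ] ℝ) →L[ℝ] ℝ := α.comp (LinearMap.toContinuousLinearMap π₀)
  have hℓ : ∀ β, ℓ β = α (π₀ β) := fun _ => rfl
  have hφ : ∀ u ∈ Icc (0:ℝ) 1, IntervalIntegrable w.phi volume 0 u := fun u hu =>
    (w.phi_cont.mono (uIcc_subset_Icc (left_mem_Icc.2 zero_le_one) hu)).intervalIntegrable
  have hprim : ∀ u ∈ Icc (0:ℝ) 1,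
      α (π₀ (∫ s in (0:ℝ)..u, w.phi s)) = ∫ s in (0:ℝ)..u, α (π₀ (w.phi s)) := fun u hu => by
    simpa only [hℓ] using (ℓ.intervalIntegral_comp_comm (hφ u hu)).symm
  have hf : ContinuousOn (fun u => α (π₀ (w.phi u))) (Icc 0 1) :=
    ℓ.continuous.comp_continuousOn w.phi_cont
  have hαlam : ContinuousOn (fun u => α (w.lam u)) (Icc 0 1) :=
    α.continuous.comp_continuousOn w.lam_cont
  have hφx : ContinuousOn (fun u => w.phi u x) (Icc 0 1) :=
    (ContinuousLinearMap.apply ℝ ℝ x).continuous.comp_continuousOn w.phi_cont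
  have hG := hg.continuousOn_primitive_Icc zero_le_one
  have hF := hf.continuousOn_primitive_Icc zero_le_one
  have hsplit : ∫ u in (0:ℝ)..1, g u * α (w.lam u + π₀ (∫ s in (0:ℝ)..u, w.phi s)) =
      (∫ u in (0:ℝ)..1, g u * α (w.lam u)) +
        ∫ u in (0:ℝ)..1, g u * ∫ s in (0:ℝ)..u, α (π₀ (w.phi s)) := by
    rw [← intervalIntegral.integral_add (f := fun u => g u * α (w.lam u))
      (g := fun u => g u * ∫ s in (0:ℝ)..u, α (π₀ (w.phi s)))
      ((hg.mul hαlam).intervalIntegrable_of_Icc zero_le_one)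
      ((hg.mul hF).intervalIntegrable_of_Icc zero_le_one)]
    refine intervalIntegral.integral_congr fun u hu => ?_
    rw [uIcc_of_le zero_le_one] at hu
    simp only [map_add, hprim u hu, mul_add]
  rw [Omega_testPair_eq_integral hskew₀,
    intervalIntegral.integral_sub (f := fun u => g u * α (w.lam u) - w.phi u x)
      (g := fun u => (∫ s in (0:ℝ)..u, g s) * α (π₀ (w.phi u)))
      (((hg.mul hαlam).sub hφx).intervalIntegrable_of_Icc zero_le_one)
      ((hG.mul hf).intervalIntegrable_of_Icc zero_le_one),
    intervalIntegral.integral_sub (f := fun u => g u * α (w.lam u)) (g := fun u => w.phi u x)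
      ((hg.mul hαlam).intervalIntegrable_of_Icc zero_le_one)
      (hφx.intervalIntegrable_of_Icc zero_le_one),
    hsplit, integral_primitive_mul hg hf zero_le_one, hprim 1 (right_mem_Icc.2 zero_le_one),
    ContinuousLinearMap.intervalIntegral_apply (hφ 1 (right_mem_Icc.2 zero_le_one))]
  ring

lemma integral_mul_apply_eq_of_mem_orth (hskew₀ : ∀ α β : E₀ →L[ℝ] ℝ, α (π₀ β) = - β (π₀ α))
    {w : WPair E₀} (hw : w ∈ orth (VSet π₀ U T₀ T₁)) {x : E₀} (hx : x ∈ T₀) (α : E₀ →L[ℝ] ℝ)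
    {g : ℝ → ℝ} (hg : ContinuousOn g (Icc 0 1))
    (h₁ : U.symm (x - (∫ s in (0:ℝ)..1, g s) • π₀ α) ∈ T₁) :
    ∫ u in (0:ℝ)..1, g u * α (w.lam u + π₀ (∫ s in (0:ℝ)..u, w.phi s)) =
      (∫ s in (0:ℝ)..1, w.phi s) x
        + (∫ s in (0:ℝ)..1, g s) * α (π₀ (∫ s in (0:ℝ)..1, w.phi s)) := by
  have h := hw _ (testPair_mem_VSet hg hx h₁)
  rw [Omega_testPair hskew₀] at h
  linarith

lemma lam_add_eq_lam_zero_of_mem_orth (hskew₀ : ∀ α β : E₀ →L[ℝ] ℝ, α (π₀ β) = - β (π₀ α))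
    {w : WPair E₀} (hw : w ∈ orth (VSet π₀ U T₀ T₁)) {u : ℝ} (hu : u ∈ Icc (0:ℝ) 1) :
    w.lam u + π₀ (∫ s in (0:ℝ)..u, w.phi s) = w.lam 0 := by
  have hμ : ContinuousOn (fun u => w.lam u + π₀ (∫ s in (0:ℝ)..u, w.phi s)) (Icc 0 1) :=
    w.lam_cont.add ((LinearMap.toContinuousLinearMap π₀).continuous.comp_continuousOn
      (w.phi_cont.continuousOn_primitive_Icc zero_le_one))
  refine (SeparatingDual.eq_iff_forall_dual_eq (R := ℝ)).2 fun α => ?_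
  have h := eq_of_forall_integral_mul_eq_zero (α.continuous.comp_continuousOn hμ)
    (fun g hg hg₀ => ?_) hu
  · simpa using h
  · simpa [hg₀] using
      integral_mul_apply_eq_of_mem_orth hskew₀ hw T₀.zero_mem α hg (by simp [hg₀])

lemma apply_lam_one_eq_of_mem_orth (hskew₀ : ∀ α β : E₀ →L[ℝ] ℝ, α (π₀ β) = - β (π₀ α))
    {w : WPair E₀} (hw : w ∈ orth (VSet π₀ U T₀ T₁)) {x : E₀} (hx : x ∈ T₀) {α : E₀ →L[ℝ] ℝ}
    (h₁ : U.symm (x - π₀ α) ∈ T₁) :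
    α (w.lam 1) = (∫ s in (0:ℝ)..1, w.phi s) x := by
  have h := integral_mul_apply_eq_of_mem_orth hskew₀ hw hx α (g := fun _ => 1)
    continuousOn_const (by simpa using h₁)
  rw [intervalIntegral.integral_congr (g := fun _ => α (w.lam 0)) fun u hu => by
    rw [uIcc_of_le zero_le_one] at hu
    simp only [one_mul, lam_add_eq_lam_zero_of_mem_orth hskew₀ hw hu]] at h
  have hlam := lam_add_eq_lam_zero_of_mem_orth hskew₀ hw (right_mem_Icc.2 zero_le_one)
  rw [eq_sub_of_add_eq hlam, map_sub]
  simp only [intervalIntegral.integral_const, sub_zero, smul_eq_mul, one_mul] at h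
  linarith

lemma lam_zero_mem_of_mem_orth (hskew₀ : ∀ α β : E₀ →L[ℝ] ℝ, α (π₀ β) = - β (π₀ α))
    (hT₀ : ∀ α ∈ Ann T₀, π₀ α ∈ T₀) {w : WPair E₀} (hw : w ∈ orth (VSet π₀ U T₀ T₁)) :
    w.lam 0 ∈ T₀ := by
  refine mem_of_forall_mem_Ann_apply_eq_zero fun β hβ => ?_
  have h := apply_lam_one_eq_of_mem_orth hskew₀ hw (hT₀ β hβ) (α := β) (by simp)
  have hlam := lam_add_eq_lam_zero_of_mem_orth hskew₀ hw (right_mem_Icc.2 zero_le_one)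
  rw [eq_sub_of_add_eq hlam, map_sub, hskew₀] at h
  linarith

lemma symm_lam_one_mem_of_mem_orth [FiniteDimensional ℝ E₁] {π₁ : (E₁ →L[ℝ] ℝ) →ₗ[ℝ] E₁}
    (hskew₀ : ∀ α β : E₀ →L[ℝ] ℝ, α (π₀ β) = - β (π₀ α))
    (hU : ∀ α : E₀ →L[ℝ] ℝ, U (π₁ (α.comp (U : E₁ →L[ℝ] E₀))) = π₀ α)
    (hT₁ : ∀ α ∈ Ann T₁, π₁ α ∈ T₁) {w : WPair E₀} (hw : w ∈ orth (VSet π₀ U T₀ T₁)) :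
    U.symm (w.lam 1) ∈ T₁ := by
  refine mem_of_forall_mem_Ann_apply_eq_zero fun γ hγ => ?_
  have hπ : π₀ (γ.comp (U.symm : E₀ →L[ℝ] E₁)) = U (π₁ γ) := by
    rw [← hU]; congr; ext; simp
  have h := apply_lam_one_eq_of_mem_orth hskew₀ hw T₀.zero_mem
    (α := γ.comp (U.symm : E₀ →L[ℝ] E₁))
    (by rw [zero_sub, map_neg, hπ, U.symm_apply_apply]; exact neg_mem (hT₁ γ hγ))
  simpa using h

end Coisotropic

theorem VSet_coisotropic_of_coisotropic_boundary_general
    (E₀ E₁ : Type*)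
    [NormedAddCommGroup E₀] [NormedSpace ℝ E₀] [FiniteDimensional ℝ E₀]
    [NormedAddCommGroup E₁] [NormedSpace ℝ E₁] [FiniteDimensional ℝ E₁]
    (π₀ : (E₀ →L[ℝ] ℝ) →ₗ[ℝ] E₀) (π₁ : (E₁ →L[ℝ] ℝ) →ₗ[ℝ] E₁)
    (hskew₀ : ∀ α β : E₀ →L[ℝ] ℝ, α (π₀ β) = - β (π₀ α))
    (U : E₁ ≃L[ℝ] E₀)
    (hU : ∀ α : E₀ →L[ℝ] ℝ, U (π₁ (α.comp (U : E₁ →L[ℝ] E₀))) = π₀ α)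
    (T₀ : Submodule ℝ E₀) (T₁ : Submodule ℝ E₁)
    (hT₀ : ∀ α ∈ Ann T₀, π₀ α ∈ T₀) (hT₁ : ∀ α ∈ Ann T₁, π₁ α ∈ T₁) :
    orth (VSet π₀ U T₀ T₁) ⊆ VSet π₀ U T₀ T₁ := fun _ hw =>
  ⟨fun _ hu => eq_sub_of_add_eq (lam_add_eq_lam_zero_of_mem_orth hskew₀ hw hu),
    lam_zero_mem_of_mem_orth hskew₀ hT₀ hw, symm_lam_one_mem_of_mem_orth hskew₀ hU hT₁ hw⟩

theorem VSet_coisotropic_of_coisotropic_boundary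
    (E₀ E₁ : Type*)
    [NormedAddCommGroup E₀] [NormedSpace ℝ E₀] [FiniteDimensional ℝ E₀]
    [NormedAddCommGroup E₁] [NormedSpace ℝ E₁] [FiniteDimensional ℝ E₁]
    (π₀ : (E₀ →L[ℝ] ℝ) →ₗ[ℝ] E₀) (π₁ : (E₁ →L[ℝ] ℝ) →ₗ[ℝ] E₁)
    (hskew₀ : ∀ α β : E₀ →L[ℝ] ℝ, α (π₀ β) = - β (π₀ α))
    (hskew₁ : ∀ α β : E₁ →L[ℝ] ℝ, α (π₁ β) = - β (π₁ α))
    (U : E₁ ≃L[ℝ] E₀)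
    (hU : ∀ α : E₀ →L[ℝ] ℝ, U (π₁ (α.comp (U : E₁ →L[ℝ] E₀))) = π₀ α)
    (T₀ : Submodule ℝ E₀) (T₁ : Submodule ℝ E₁)
    (hT₀ : ∀ α ∈ Ann T₀, π₀ α ∈ T₀) (hT₁ : ∀ α ∈ Ann T₁, π₁ α ∈ T₁) :
    orth (VSet π₀ U T₀ T₁) ⊆ VSet π₀ U T₀ T₁ :=
  VSet_coisotropic_of_coisotropic_boundary_general E₀ E₁ π₀ π₁ hskew₀ U hU T₀ T₁ hT₀ hT₁
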